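/- Let K be a commutative ring, m < n with n = m + gcd(m,n), d = gcd(m,n), and X, Y two m×n matrices over K. Let A(X,Y) be the (mn/d)×(mn/d) block bidiagonal matrix with diagonal blocks X and subdiagonal blocks Y. Then for every M = ((a,b),(c,e)) ∈ SL(2,K), det A(aX + cY, bX + eY) = det A(X,Y). -/

import Mathlib

/-- The (mn/d)×(mn/d) block bidiagonal matrix with `s+1` block-rows of height `m`
(and, when `(s+1)*m = s*n`, `s` block-columns of width `n`), having `X` in the
diagonal blocks `(i,i)` and `Y` in the subdiagonal blocks `(i+1,i)`, zero elsewhere. -/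
def blockBidiag {K : Type*} [CommRing K] {m n : ℕ} (hm : 0 < m) (hn : 0 < n) (s : ℕ)
    (X Y : Matrix (Fin m) (Fin n) K) :
    Matrix (Fin ((s + 1) * m)) (Fin ((s + 1) * m)) K :=
  Matrix.of fun r c =>
    if r.val / m = c.val / n then
      X ⟨r.val % m, Nat.mod_lt _ hm⟩ ⟨c.val % n, Nat.mod_lt _ hn⟩
    else if r.val / m = c.val / n + 1 then
      Y ⟨r.val % m, Nat.mod_lt _ hm⟩ ⟨c.val % n, Nat.mod_lt _ hn⟩
    else 0

/-!
Let `S_k(M)` be the matrix of the substitution `x ↦ M₀₀ x + M₀₁ y, y ↦ M₁₀ x + M₁₁ y` on binary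
forms of degree `k`, and `D₀, D₁` the matrices of multiplication by `x, y` from degree `k` to
degree `k + 1`. Writing `m / gcd(m, n) = k + 1`, the hypothesis `n = m + gcd(m, n)` gives
`(k + 2) m = (k + 1) n`, and `A(X, Y)` is a reindexing of `D₀ ⊗ X + D₁ ⊗ Y`. As the substitution
is a ring map, `S_{k+1}(M) D_r = ∑ᵢ M_{ri} Dᵢ S_k(M)`, hence
`(S_{k+1}(M) ⊗ 1) A(X, Y) = A(M · (X, Y)) (S_k(M) ⊗ 1)`.
Finally `det S_k(M) = (det M) ^ C(k + 1, 2)`: directly for triangular `M`, by an LU factorisation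
for the generic matrix over the fraction field of `ℤ[Mᵢⱼ]`, and in general by specialisation.
So both Kronecker factors are unimodular when `det M = 1`.
-/

open MvPolynomial

namespace BinaryForm

variable {K : Type*} [CommRing K]

noncomputable def binExp (k : ℕ) (i : Fin (k + 1)) : Fin 2 →₀ ℕ :=
  Finsupp.single 0 (k - i) + Finsupp.single 1 (i : ℕ)

@[simp] lemma binExp_apply_zero (k : ℕ) (i : Fin (k + 1)) : binExp k i 0 = k - i := by
  simp [binExp]

@[simp] lemma binExp_apply_one (k : ℕ) (i : Fin (k + 1)) : binExp k i 1 = i := by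
  simp [binExp]

lemma degree_binExp (k : ℕ) (i : Fin (k + 1)) : (binExp k i).degree = k := by
  rw [Finsupp.degree_eq_sum, Fin.sum_univ_two, binExp_apply_zero, binExp_apply_one]
  omega

lemma binExp_injective (k : ℕ) : Function.Injective (binExp k) := fun i j h =>
  Fin.ext (by simpa using congrArg (· 1) h)

lemma exists_binExp_eq {k : ℕ} {d : Fin 2 →₀ ℕ} (hd : d.degree = k) : ∃ i, binExp k i = d := by
  rw [Finsupp.degree_eq_sum, Fin.sum_univ_two] at hd
  refine ⟨⟨d 1, by omega⟩, Finsupp.ext fun r => ?_⟩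
  fin_cases r <;> simp; omega

noncomputable def binMonomial (k : ℕ) (i : Fin (k + 1)) : MvPolynomial (Fin 2) K :=
  monomial (binExp k i) 1

lemma binMonomial_eq (k : ℕ) (i : Fin (k + 1)) :
    (binMonomial k i : MvPolynomial (Fin 2) K) = X 0 ^ (k - i) * X 1 ^ (i : ℕ) := by
  rw [binMonomial, binExp, monomial_single_add, X_pow_eq_monomial, X_pow_eq_monomial,
    monomial_mul, one_mul]

lemma binMonomial_mul_X_zero (k : ℕ) (j : Fin (k + 1)) :
    (binMonomial k j * X 0 : MvPolynomial (Fin 2) K) = binMonomial (k + 1) j.castSucc := by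
  rw [binMonomial_eq, binMonomial_eq, Fin.val_castSucc, show k + 1 - j = k - j + 1 by omega,
    pow_succ]
  ring

lemma binMonomial_mul_X_one (k : ℕ) (j : Fin (k + 1)) :
    (binMonomial k j * X 1 : MvPolynomial (Fin 2) K) = binMonomial (k + 1) j.succ := by
  rw [binMonomial_eq, binMonomial_eq, Fin.val_succ, Nat.add_sub_add_right, pow_succ]
  ring

lemma isHomogeneous_binMonomial (k : ℕ) (i : Fin (k + 1)) :
    (binMonomial k i : MvPolynomial (Fin 2) K).IsHomogeneous k :=
  isHomogeneous_monomial _ (degree_binExp k i)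

lemma coeff_binExp_binMonomial (k : ℕ) (i j : Fin (k + 1)) :
    coeff (binExp k i) (binMonomial k j : MvPolynomial (Fin 2) K) = if i = j then 1 else 0 := by
  simp only [binMonomial, coeff_monomial, (binExp_injective k).eq_iff, eq_comm]

lemma eq_sum_binMonomial {k : ℕ} {p : MvPolynomial (Fin 2) K}
    (hp : p.IsHomogeneous k) : p = ∑ i, coeff (binExp k i) p • binMonomial k i := by
  ext d
  simp only [coeff_sum, coeff_smul, binMonomial, coeff_monomial, smul_eq_mul, mul_ite, mul_one,
    mul_zero]
  by_cases hd : d.degree = k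
  · obtain ⟨i, rfl⟩ := exists_binExp_eq hd
    simp [(binExp_injective k).eq_iff]
  · rw [hp.coeff_eq_zero hd, Finset.sum_eq_zero]
    rintro i -
    rw [if_neg]
    rintro rfl
    exact hd (degree_binExp k i)

noncomputable def formMatrix (f : MvPolynomial (Fin 2) K →ₗ[K] MvPolynomial (Fin 2) K) (k l : ℕ) :
    Matrix (Fin (l + 1)) (Fin (k + 1)) K :=
  Matrix.of fun i j => coeff (binExp l i) (f (binMonomial k j))

lemma formMatrix_comp (f g : MvPolynomial (Fin 2) K →ₗ[K] MvPolynomial (Fin 2) K) {k l : ℕ}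
    (hg : ∀ j, (g (binMonomial k j)).IsHomogeneous l) (p : ℕ) :
    formMatrix (f ∘ₗ g) k p = formMatrix f l p * formMatrix g k l := by
  ext i j
  rw [formMatrix, Matrix.of_apply, LinearMap.comp_apply, eq_sum_binMonomial (hg j)]
  simp [Matrix.mul_apply, formMatrix, coeff_sum, mul_comm]

lemma formMatrix_sum_smul {ι : Type*} (s : Finset ι) (c : ι → K)
    (f : ι → MvPolynomial (Fin 2) K →ₗ[K] MvPolynomial (Fin 2) K) (k l : ℕ) :
    formMatrix (∑ i ∈ s, c i • f i) k l = ∑ i ∈ s, c i • formMatrix (f i) k l := by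
  ext i j
  simp [formMatrix, Matrix.sum_apply, coeff_sum]

noncomputable def linForm {σ : Type*} [Fintype σ] (v : σ → K) : MvPolynomial σ K :=
  ∑ i, C (v i) * X i

lemma isHomogeneous_linForm {σ : Type*} [Fintype σ] (v : σ → K) : (linForm v).IsHomogeneous 1 :=
  IsHomogeneous.sum _ _ 1 fun i _ => isHomogeneous_C_mul_X (v i) i

lemma coeff_single_linForm_pow {σ : Type*} [Fintype σ] [DecidableEq σ] (v : σ → K) (r : σ)
    (p : ℕ) : coeff (Finsupp.single r p) (linForm v ^ p) = v r ^ p := by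
  rw [linForm]
  induction p with
  | zero => simp
  | succ p ih =>
    rw [pow_succ, Finset.mul_sum, coeff_sum, Finset.sum_eq_single r]
    · rw [C_mul_X_eq_monomial, coeff_mul_monomial', if_pos (by simp), ← Finsupp.single_tsub,
        Nat.add_sub_cancel, ih, pow_succ]
    · intro i _ hi
      rw [C_mul_X_eq_monomial, coeff_mul_monomial', if_neg]
      simp [Finsupp.single_le_iff, hi]
    · simp

noncomputable def linSubst (M : Matrix (Fin 2) (Fin 2) K) :
    MvPolynomial (Fin 2) K →ₐ[K] MvPolynomial (Fin 2) K :=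
  aeval fun r => linForm (M r)

lemma linSubst_X (M : Matrix (Fin 2) (Fin 2) K) (r : Fin 2) : linSubst M (X r) = linForm (M r) :=
  aeval_X _ _

lemma linSubst_mul (M N : Matrix (Fin 2) (Fin 2) K) :
    linSubst (N * M) = (linSubst M).comp (linSubst N) := by
  refine algHom_ext fun r => ?_
  simp only [AlgHom.comp_apply, linSubst_X, linForm, map_sum, _root_.map_mul, Matrix.mul_apply,
    Finset.sum_mul, Finset.mul_sum, mul_assoc]
  rw [Finset.sum_comm]
  simp [linSubst, linForm]

lemma isHomogeneous_linSubst (M : Matrix (Fin 2) (Fin 2) K) {k : ℕ} {p : MvPolynomial (Fin 2) K}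
    (hp : p.IsHomogeneous k) : (linSubst M p).IsHomogeneous k := by
  have h := hp.aeval (fun r => linForm (M r)) fun r => isHomogeneous_linForm (M r)
  rwa [one_mul] at h

/-- The matrix of `Sym^k M` on binary forms of degree `k`. -/
noncomputable def symPowMatrix (M : Matrix (Fin 2) (Fin 2) K) (k : ℕ) :
    Matrix (Fin (k + 1)) (Fin (k + 1)) K :=
  formMatrix (linSubst M).toLinearMap k k

lemma symPowMatrix_mul (M N : Matrix (Fin 2) (Fin 2) K) (k : ℕ) :
    symPowMatrix (N * M) k = symPowMatrix M k * symPowMatrix N k := by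
  rw [symPowMatrix, linSubst_mul, AlgHom.comp_toLinearMap,
    formMatrix_comp _ _ fun j => isHomogeneous_linSubst N (isHomogeneous_binMonomial k j)]
  rfl

variable (K) in
noncomputable def mulVarMatrix (r : Fin 2) (k : ℕ) :
    Matrix (Fin (k + 1 + 1)) (Fin (k + 1)) K :=
  formMatrix (LinearMap.mulRight K (X r)) k (k + 1)

lemma mulVarMatrix_zero_apply (k : ℕ) (i : Fin (k + 1 + 1)) (j : Fin (k + 1)) :
    mulVarMatrix K 0 k i j = if (i : ℕ) = j then 1 else 0 := by
  rw [mulVarMatrix, formMatrix, Matrix.of_apply, LinearMap.mulRight_apply, binMonomial_mul_X_zero,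
    coeff_binExp_binMonomial]
  simp only [Fin.ext_iff, Fin.val_castSucc]

lemma mulVarMatrix_one_apply (k : ℕ) (i : Fin (k + 1 + 1)) (j : Fin (k + 1)) :
    mulVarMatrix K 1 k i j = if (i : ℕ) = j + 1 then 1 else 0 := by
  rw [mulVarMatrix, formMatrix, Matrix.of_apply, LinearMap.mulRight_apply, binMonomial_mul_X_one,
    coeff_binExp_binMonomial]
  simp only [Fin.ext_iff, Fin.val_succ]

lemma symPowMatrix_mul_mulVarMatrix (M : Matrix (Fin 2) (Fin 2) K) (r : Fin 2) (k : ℕ) :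
    symPowMatrix M (k + 1) * mulVarMatrix K r k =
      ∑ i, M r i • (mulVarMatrix K i k * symPowMatrix M k) := by
  have hcomm : (linSubst M).toLinearMap ∘ₗ LinearMap.mulRight K (X r) =
      ∑ i, M r i • (LinearMap.mulRight K (X i) ∘ₗ (linSubst M).toLinearMap) := by
    refine LinearMap.ext fun p => ?_
    simp [linSubst_X, linForm, smul_eq_C_mul]
    ring
  calc symPowMatrix M (k + 1) * mulVarMatrix K r k
      = formMatrix ((linSubst M).toLinearMap ∘ₗ LinearMap.mulRight K (X r)) k (k + 1) :=
        (formMatrix_comp _ _ (fun j => (isHomogeneous_binMonomial k j).mul (isHomogeneous_X K r))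
          _).symm
    _ = ∑ i, M r i • (mulVarMatrix K i k * symPowMatrix M k) := by
      rw [hcomm, formMatrix_sum_smul]
      refine Finset.sum_congr rfl fun i _ => ?_
      rw [formMatrix_comp _ _ fun j => isHomogeneous_linSubst M (isHomogeneous_binMonomial k j)]
      rfl

lemma symPowMatrix_apply (M : Matrix (Fin 2) (Fin 2) K) (k : ℕ) (i j : Fin (k + 1)) :
    symPowMatrix M k i j =
      coeff (binExp k i) (linForm (M 0) ^ (k - j) * linForm (M 1) ^ (j : ℕ)) := by
  rw [symPowMatrix, formMatrix, Matrix.of_apply, AlgHom.toLinearMap_apply, binMonomial_eq,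
    map_mul, map_pow, map_pow, linSubst_X, linSubst_X]

lemma prod_pow_sub_mul_pow (a e : K) (k : ℕ) :
    ∏ i : Fin (k + 1), a ^ (k - i) * e ^ (i : ℕ) = (a * e) ^ (k + 1).choose 2 := by
  have hreflect : ∑ i ∈ Finset.range (k + 1), (k - i) = ∑ i ∈ Finset.range (k + 1), i := by
    simpa using Finset.sum_range_reflect (fun i => i) (k + 1)
  rw [Finset.prod_mul_distrib, Finset.prod_pow_eq_pow_sum, Finset.prod_pow_eq_pow_sum,
    Fin.sum_univ_eq_sum_range (k - ·), Fin.sum_univ_eq_sum_range (·), hreflect,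
    Finset.sum_range_id, Nat.choose_two_right, mul_pow]

lemma det_symPowMatrix_of_apply_one_zero (M : Matrix (Fin 2) (Fin 2) K) (hM : M 1 0 = 0)
    (k : ℕ) : (symPowMatrix M k).det = M.det ^ (k + 1).choose 2 := by
  have hy : linForm (M 1) = monomial (Finsupp.single 1 1) (M 1 1) := by
    simp [linForm, Fin.sum_univ_two, hM, C_mul_X_eq_monomial]
  have hentry : ∀ i j : Fin (k + 1), symPowMatrix M k i j =
      if j ≤ i then
        coeff (binExp k i - Finsupp.single 1 (j : ℕ)) (linForm (M 0) ^ (k - j)) * M 1 1 ^ (j : ℕ)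
      else 0 := by
    intro i j
    rw [symPowMatrix_apply, hy, monomial_pow, Finsupp.smul_single_one, coeff_mul_monomial']
    simp only [Finsupp.single_le_iff, binExp_apply_one, Fin.le_def]
  have hdiag : ∀ i : Fin (k + 1),
      binExp k i - Finsupp.single 1 (i : ℕ) = Finsupp.single 0 (k - i) := by
    intro i
    ext r
    fin_cases r <;> simp
  rw [Matrix.det_of_isLowerTriangular _ fun i j (hij : i < j) => by
    rw [hentry, if_neg (not_le.2 hij)]]
  simp only [hentry, le_refl, if_true, hdiag, coeff_single_linForm_pow]
  rw [prod_pow_sub_mul_pow, Matrix.det_fin_two, hM, mul_zero, sub_zero]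

lemma det_symPowMatrix_of_apply_zero_one (M : Matrix (Fin 2) (Fin 2) K) (hM : M 0 1 = 0)
    (k : ℕ) : (symPowMatrix M k).det = M.det ^ (k + 1).choose 2 := by
  have hx : linForm (M 0) = monomial (Finsupp.single 0 1) (M 0 0) := by
    simp [linForm, Fin.sum_univ_two, hM, C_mul_X_eq_monomial]
  have hentry : ∀ i j : Fin (k + 1), symPowMatrix M k i j =
      if i ≤ j then
        M 0 0 ^ (k - j) * coeff (binExp k i - Finsupp.single 0 (k - j)) (linForm (M 1) ^ (j : ℕ))
      else 0 := by
    intro i j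
    rw [symPowMatrix_apply, hx, monomial_pow, Finsupp.smul_single_one, coeff_monomial_mul']
    have hle : k - j ≤ k - i ↔ i ≤ j := by omega
    simp only [Finsupp.single_le_iff, binExp_apply_zero, hle]
  have hdiag : ∀ i : Fin (k + 1),
      binExp k i - Finsupp.single 0 (k - i) = Finsupp.single 1 (i : ℕ) := by
    intro i
    ext r
    fin_cases r <;> simp
  rw [Matrix.det_of_isUpperTriangular fun i j (hij : j < i) => by
    rw [hentry, if_neg (not_le.2 hij)]]
  simp only [hentry, le_refl, if_true, hdiag, coeff_single_linForm_pow]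
  rw [prod_pow_sub_mul_pow, Matrix.det_fin_two, hM, zero_mul, sub_zero]

lemma symPowMatrix_map {L : Type*} [CommRing L] (f : K →+* L) (M : Matrix (Fin 2) (Fin 2) K)
    (k : ℕ) : (symPowMatrix M k).map f = symPowMatrix (M.map f) k := by
  ext i j
  simp only [Matrix.map_apply, symPowMatrix_apply, ← coeff_map, linForm, map_mul, map_pow, map_sum,
    map_C, map_X]

lemma det_symPowMatrix_of_ne_zero {F : Type*} [Field F] (M : Matrix (Fin 2) (Fin 2) F)
    (hM : M 1 1 ≠ 0) (k : ℕ) : (symPowMatrix M k).det = M.det ^ (k + 1).choose 2 := by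
  have hfactor :
      M = !![1, M 0 1 / M 1 1; 0, 1] * !![M 0 0 - M 0 1 * M 1 0 / M 1 1, 0; M 1 0, M 1 1] := by
    ext i j
    fin_cases i <;> fin_cases j <;> simp [Matrix.mul_apply, Fin.sum_univ_two, hM]
    ring
  rw [hfactor, symPowMatrix_mul, Matrix.det_mul, det_symPowMatrix_of_apply_zero_one _ (by simp),
    det_symPowMatrix_of_apply_one_zero _ (by simp), Matrix.det_mul, mul_pow, mul_comm]

theorem det_symPowMatrix (M : Matrix (Fin 2) (Fin 2) K) (k : ℕ) :
    (symPowMatrix M k).det = M.det ^ (k + 1).choose 2 := by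
  set R := MvPolynomial (Fin 2 × Fin 2) ℤ
  set U : Matrix (Fin 2) (Fin 2) R := Matrix.mvPolynomialX (Fin 2) (Fin 2) ℤ
  have hU : (symPowMatrix U k).det = U.det ^ (k + 1).choose 2 := by
    apply IsFractionRing.injective R (FractionRing R)
    rw [RingHom.map_det, RingHom.mapMatrix_apply, symPowMatrix_map, map_pow, RingHom.map_det,
      RingHom.mapMatrix_apply]
    refine det_symPowMatrix_of_ne_zero _ ?_ k
    simpa [U] using (IsFractionRing.injective R (FractionRing R)).ne (X_ne_zero (1, 1))
  have hM := congrArg (aeval fun p : Fin 2 × Fin 2 => M p.1 p.2).toRingHom hU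
  have hspec : U.map (aeval fun p : Fin 2 × Fin 2 => M p.1 p.2) = M :=
    Matrix.mvPolynomialX_mapMatrix_aeval ℤ M
  rwa [RingHom.map_det, RingHom.mapMatrix_apply, symPowMatrix_map, map_pow, RingHom.map_det,
    RingHom.mapMatrix_apply, AlgHom.toRingHom_eq_coe, RingHom.coe_coe, hspec] at hM

end BinaryForm

open Kronecker BinaryForm

lemma Matrix.det_submatrix_eq_of_mul_eq_mul {R ι κ ν : Type*} [CommRing R] [Fintype ι]
    [DecidableEq ι] [Fintype κ] [DecidableEq κ] [Fintype ν] [DecidableEq ν]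
    {A B : Matrix ι κ R} {P : Matrix ι ι R} {Q : Matrix κ κ R} (eR : ν ≃ ι) (eC : ν ≃ κ)
    (h : P * A = B * Q) (hP : P.det = 1) (hQ : Q.det = 1) :
    (A.submatrix eR eC).det = (B.submatrix eR eC).det := by
  have hsub : P.submatrix eR eR * A.submatrix eR eC = B.submatrix eR eC * Q.submatrix eC eC := by
    rw [Matrix.submatrix_mul_equiv, Matrix.submatrix_mul_equiv, h]
  have hdet := congrArg Matrix.det hsub
  rwa [Matrix.det_mul, Matrix.det_mul, Matrix.det_submatrix_equiv_self,
    Matrix.det_submatrix_equiv_self, hP, hQ, one_mul, mul_one] at hdet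

section

variable {K : Type*} [CommRing K]

noncomputable def blockBidiagProd {m n : ℕ} (k : ℕ) (X Y : Matrix (Fin m) (Fin n) K) :
    Matrix (Fin (k + 1 + 1) × Fin m) (Fin (k + 1) × Fin n) K :=
  mulVarMatrix K 0 k ⊗ₖ X + mulVarMatrix K 1 k ⊗ₖ Y

lemma blockBidiag_eq_submatrix {m n : ℕ} (hm : 0 < m) (hn : 0 < n) {k : ℕ}
    (h : (k + 1 + 1) * m = (k + 1) * n) (X Y : Matrix (Fin m) (Fin n) K) :
    blockBidiag hm hn (k + 1) X Y =
      (blockBidiagProd k X Y).submatrix finProdFinEquiv.symm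
        ((finCongr h).trans finProdFinEquiv.symm) := by
  ext r c
  simp only [blockBidiag, blockBidiagProd, Matrix.submatrix_apply, Matrix.add_apply,
    Matrix.kroneckerMap_apply, mulVarMatrix_zero_apply, mulVarMatrix_one_apply,
    Equiv.trans_apply, finProdFinEquiv_symm_apply, finCongr_apply, Fin.divNat, Fin.modNat]
  split_ifs <;> simp_all

lemma symPowMatrix_kronecker_mul_blockBidiagProd (M : Matrix (Fin 2) (Fin 2) K) {m n : ℕ} (k : ℕ)
    (X Y : Matrix (Fin m) (Fin n) K) :
    (symPowMatrix M (k + 1) ⊗ₖ (1 : Matrix (Fin m) (Fin m) K)) * blockBidiagProd k X Y =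
      blockBidiagProd k (M 0 0 • X + M 1 0 • Y) (M 0 1 • X + M 1 1 • Y) *
        (symPowMatrix M k ⊗ₖ (1 : Matrix (Fin n) (Fin n) K)) := by
  simp only [blockBidiagProd, Matrix.mul_add, Matrix.add_mul, ← Matrix.mul_kronecker_mul,
    Matrix.mul_one, Matrix.one_mul, Matrix.smul_mul, symPowMatrix_mul_mulVarMatrix,
    Fin.sum_univ_two, Matrix.add_kronecker, Matrix.kronecker_add, Matrix.smul_kronecker,
    Matrix.kronecker_smul]
  abel

end

theorem det_blockBidiag_sl2_invariant (K : Type*) [CommRing K] (m n : ℕ)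
    (hm : 0 < m) (hmn : m < n) (hgcd : n = m + Nat.gcd m n)
    (X Y : Matrix (Fin m) (Fin n) K)
    (a b c e : K) (hM : a * e - b * c = 1) :
    (blockBidiag hm (hm.trans hmn) (m / Nat.gcd m n) (a • X + c • Y) (b • X + e • Y)).det =
      (blockBidiag hm (hm.trans hmn) (m / Nat.gcd m n) X Y).det := by
  obtain ⟨k, hk⟩ : ∃ k, m / Nat.gcd m n = k + 1 :=
    Nat.exists_eq_add_one.2 (Nat.div_pos (Nat.gcd_le_left n hm) (Nat.gcd_pos_of_pos_left n hm))
  have hblocks : (k + 1 + 1) * m = (k + 1) * n := by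
    have hdiv := Nat.div_mul_cancel (Nat.gcd_dvd_left m n)
    rw [hk] at hdiv
    rw [hgcd]
    linarith
  have hdet : ∀ l s, (symPowMatrix !![a, b; c, e] l ⊗ₖ (1 : Matrix (Fin s) (Fin s) K)).det = 1 := by
    intro l s
    rw [Matrix.det_kronecker, det_symPowMatrix, Matrix.det_fin_two_of, hM]
    simp
  rw [hk, blockBidiag_eq_submatrix _ _ hblocks, blockBidiag_eq_submatrix _ _ hblocks]
  exact (Matrix.det_submatrix_eq_of_mul_eq_mul _ _
    (symPowMatrix_kronecker_mul_blockBidiagProd !![a, b; c, e] k X Y) (hdet _ _) (hdet _ _)).symm
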